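/- Assume [C1]–[C4], and let (λ_n) be a sequence of positive random variables satisfying [D1]–[D3]. Then λ_n^{-2} ‖Σ̂_{Z,n} − Σ̆_{Z,n}‖_{ℓ∞} = o_p(r) as n → ∞. -/

import Mathlib

open Filter MeasureTheory ProbabilityTheory Matrix
open scoped Topology ENNReal NNReal

noncomputable section

/-- Entrywise ℓ∞ norm of a matrix. -/
def linf {m k : ℕ} (A : Matrix (Fin m) (Fin k) ℝ) : ℝ := ⨆ i, ⨆ j, |A i j|

/-- Entrywise ℓ2 (Frobenius) norm of a matrix. -/
def l2 {m k : ℕ} (A : Matrix (Fin m) (Fin k) ℝ) : ℝ := Real.sqrt (∑ i, ∑ j, (A i j) ^ 2)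

/-- ℓ1 norm of the off-diagonal part of a square matrix. -/
def l1off {d : ℕ} (A : Matrix (Fin d) (Fin d) ℝ) : ℝ :=
  ∑ i, ∑ j, if i = j then 0 else |A i j|

/-- The ℓw norm of a vector, w ∈ [1,∞]. -/
def vecNorm (w : ℝ≥0∞) {k : ℕ} (x : Fin k → ℝ) : ℝ :=
  if w = ⊤ then ⨆ i, |x i| else (∑ i, |x i| ^ w.toReal) ^ (1 / w.toReal)

/-- The ℓw operator norm of a matrix. -/
def opNorm (w : ℝ≥0∞) {m k : ℕ} (A : Matrix (Fin m) (Fin k) ℝ) : ℝ :=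
  sSup {c : ℝ | ∃ x : Fin k → ℝ, vecNorm w x = 1 ∧ c = vecNorm w (A.mulVec x)}

/-- Largest eigenvalue of a symmetric matrix (via the Rayleigh quotient). -/
def lamMax {d : ℕ} (A : Matrix (Fin d) (Fin d) ℝ) : ℝ :=
  sSup {c : ℝ | ∃ x : Fin d → ℝ, ∑ i, (x i) ^ 2 = 1 ∧ c = ∑ i, ∑ j, x i * A i j * x j}

/-- Smallest eigenvalue of a symmetric matrix (via the Rayleigh quotient). -/
def lamMin {d : ℕ} (A : Matrix (Fin d) (Fin d) ℝ) : ℝ :=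
  sInf {c : ℝ | ∃ x : Fin d → ℝ, ∑ i, (x i) ^ 2 = 1 ∧ c = ∑ i, ∑ j, x i * A i j * x j}

/-- s(A): number of nonzero off-diagonal entries. -/
def spars {d : ℕ} (A : Matrix (Fin d) (Fin d) ℝ) : ℕ :=
  Set.ncard {p : Fin d × Fin d | p.1 ≠ p.2 ∧ A p.1 p.2 ≠ 0}

/-- 𝔡(A): maximal number of nonzero off-diagonal entries in a column. -/
def degree {d : ℕ} (A : Matrix (Fin d) (Fin d) ℝ) : ℕ :=
  ⨆ j : Fin d, Set.ncard {i : Fin d | i ≠ j ∧ A i j ≠ 0}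

/-- `Z_n = O_p(a_n)` for random variables on a sequence of probability spaces. -/
def IsBigOp {Ω : ℕ → Type*} [∀ n, MeasurableSpace (Ω n)] (P : ∀ n, Measure (Ω n))
    (Z a : ∀ n, Ω n → ℝ) : Prop :=
  ∀ ε : ℝ, 0 < ε → ∃ M : ℝ, 0 < M ∧
    Filter.limsup (fun n => ((P n) {ω | M * a n ω < |Z n ω|}).toReal) Filter.atTop ≤ ε

/-- `Z_n = o_p(a_n)`, i.e. `Z_n / a_n →ᵖ 0`. -/
def IsLittleOp {Ω : ℕ → Type*} [∀ n, MeasurableSpace (Ω n)] (P : ∀ n, Measure (Ω n))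
    (Z a : ∀ n, Ω n → ℝ) : Prop :=
  ∀ ε : ℝ, 0 < ε →
    Filter.Tendsto (fun n => ((P n) {ω | ε * a n ω < |Z n ω|}).toReal) Filter.atTop (nhds 0)

/-- Column-wise vectorization of a square matrix. -/
def vecM {d : ℕ} (A : Matrix (Fin d) (Fin d) ℝ) : Fin (d * d) → ℝ :=
  fun k => A (finProdFinEquiv.symm k).2 (finProdFinEquiv.symm k).1

/-- Kronecker product, reindexed to `Fin (d*d)`. -/
def kron {d : ℕ} (A B : Matrix (Fin d) (Fin d) ℝ) : Matrix (Fin (d * d)) (Fin (d * d)) ℝ :=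
  Matrix.reindex finProdFinEquiv finProdFinEquiv (Matrix.kroneckerMap (· * ·) A B)

/-- J̃ := −J(Θ ⊗ Θ). -/
def tildeJ {m k : ℕ} (J : Matrix (Fin m) (Fin (k * k)) ℝ) (Θ : Matrix (Fin k) (Fin k) ℝ) :
    Matrix (Fin m) (Fin (k * k)) ℝ :=
  -(J * kron Θ Θ)

/-- Standard Gaussian measure on ℝ^k. -/
def stdGaussianPi (k : ℕ) : Measure (Fin k → ℝ) :=
  MeasureTheory.Measure.pi fun _ => ProbabilityTheory.gaussianReal 0 1

instance (k : ℕ) : IsProbabilityMeasure (stdGaussianPi k) := by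
  unfold stdGaussianPi; infer_instance

/-- diag(S)^{1/2}. -/
def diagSqrt {d : ℕ} (S : Matrix (Fin d) (Fin d) ℝ) : Matrix (Fin d) (Fin d) ℝ :=
  Matrix.diagonal fun i => Real.sqrt (S i i)

/-- Correlation matrix V⁻¹ S V⁻¹ with V = diag(S)^{1/2}. -/
def corrOf {d : ℕ} (S : Matrix (Fin d) (Fin d) ℝ) : Matrix (Fin d) (Fin d) ℝ :=
  (diagSqrt S)⁻¹ * S * (diagSqrt S)⁻¹

/-- The weighted graphical-Lasso objective based on a covariance estimate `Sig`. -/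
def objTheta {d : ℕ} (Sig : Matrix (Fin d) (Fin d) ℝ) (lam : ℝ)
    (Θ : Matrix (Fin d) (Fin d) ℝ) : ℝ :=
  Matrix.trace (Θ * Sig) - Real.log Θ.det +
    lam * ∑ i, ∑ j, if i = j then 0
      else Real.sqrt (Sig i i) * Real.sqrt (Sig j j) * |Θ i j|

/-- The graphical-Lasso objective based on a correlation estimate `R`. -/
def objK {d : ℕ} (R : Matrix (Fin d) (Fin d) ℝ) (lam : ℝ)
    (K : Matrix (Fin d) (Fin d) ℝ) : ℝ :=
  Matrix.trace (K * R) - Real.log K.det + lam * l1off K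

/-!
Write Δ := Σ̂_{YX} − β Σ̂_X. Whenever Σ̂_X is invertible, the definitions give the exact identity
Σ̂_Z − Σ̆_Z = −Δ Σ̂_X⁻¹ Δᵀ. On events of probability tending to one, λmin(Σ_X) ≥ 1/M and
r ‖Σ̂_X − Σ_X‖_{ℓ∞} ≤ 1/(2M), so the Rayleigh quotient of Σ̂_X stays above 1/(2M); then
‖Σ̂_X⁻¹ v‖ ≤ 2M ‖v‖, and Cauchy–Schwarz bounds every entry of Δ Σ̂_X⁻¹ Δᵀ by 2M r ‖Δ‖²_{ℓ∞},
which is at most ε r λ² once ‖Δ‖_{ℓ∞} ≤ (ε/(2M))^{1/2} λ, an event whose probability tends to one by [D1].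
-/

section DotProduct

variable {ι κ : Type*} [Fintype ι]

lemma dotProduct_self_nonneg (x : ι → ℝ) : 0 ≤ x ⬝ᵥ x :=
  Finset.sum_nonneg fun i _ => mul_self_nonneg (x i)

lemma sq_dotProduct_le (x y : ι → ℝ) : (x ⬝ᵥ y) ^ 2 ≤ (x ⬝ᵥ x) * (y ⬝ᵥ y) := by
  simpa only [dotProduct, sq] using Finset.sum_mul_sq_le_sq_mul_sq Finset.univ x y

lemma mulVec_dotProduct_self_le [Fintype κ] (A : Matrix κ ι ℝ) (x : ι → ℝ) :
    A *ᵥ x ⬝ᵥ A *ᵥ x ≤ (∑ i, A i ⬝ᵥ A i) * (x ⬝ᵥ x) := by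
  rw [Finset.sum_mul]
  exact Finset.sum_le_sum fun i _ => (sq (A i ⬝ᵥ x)).symm.trans_le (sq_dotProduct_le (A i) x)

variable [DecidableEq ι] {A : Matrix ι ι ℝ} {c : ℝ}

lemma isUnit_det_of_coercive (hc : 0 < c) (hA : ∀ x, c * (x ⬝ᵥ x) ≤ x ⬝ᵥ A *ᵥ x) :
    IsUnit A.det := by
  rw [← Matrix.isUnit_iff_isUnit_det, ← Matrix.mulVec_injective_iff_isUnit]
  intro x y hxy
  have hz : A *ᵥ (x - y) = 0 := by rw [Matrix.mulVec_sub, hxy, sub_self]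
  have h := hA (x - y)
  rw [hz, dotProduct_zero] at h
  have : (x - y) ⬝ᵥ (x - y) = 0 :=
    le_antisymm (nonpos_of_mul_nonpos_right h hc) (dotProduct_self_nonneg _)
  exact sub_eq_zero.1 (dotProduct_self_eq_zero.1 this)

lemma sq_mul_inv_mulVec_dotProduct_self_le (hc : 0 < c)
    (hA : ∀ x, c * (x ⬝ᵥ x) ≤ x ⬝ᵥ A *ᵥ x) (v : ι → ℝ) :
    c ^ 2 * (A⁻¹ *ᵥ v ⬝ᵥ A⁻¹ *ᵥ v) ≤ v ⬝ᵥ v := by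
  set w := A⁻¹ *ᵥ v
  have hAw : A *ᵥ w = v := by
    rw [Matrix.mulVec_mulVec, Matrix.mul_nonsing_inv _ (isUnit_det_of_coercive hc hA),
      Matrix.one_mulVec]
  have hcw : c * (w ⬝ᵥ w) ≤ w ⬝ᵥ v := hAw ▸ hA w
  have hcs := sq_dotProduct_le w v
  have hw := dotProduct_self_nonneg w
  have hv := dotProduct_self_nonneg v
  rcases hw.eq_or_lt with hw0 | hwpos
  · rw [← hw0, mul_zero]; exact hv
  · have : (c * (w ⬝ᵥ w)) ^ 2 ≤ (w ⬝ᵥ w) * (v ⬝ᵥ v) :=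
      (pow_le_pow_left₀ (by positivity) hcw 2).trans hcs
    nlinarith

lemma abs_mul_inv_mul_transpose_apply_le (hc : 0 < c)
    (hA : ∀ x, c * (x ⬝ᵥ x) ≤ x ⬝ᵥ A *ᵥ x) (Δ : Matrix κ ι ℝ) {b : ℝ}
    (hΔ : ∀ i, Δ i ⬝ᵥ Δ i ≤ b) (i j : κ) : |(Δ * A⁻¹ * Δᵀ) i j| ≤ b / c := by
  have happ : (Δ * A⁻¹ * Δᵀ) i j = Δ i ⬝ᵥ A⁻¹ *ᵥ Δ j := by
    rw [Matrix.mul_assoc]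
    simp only [Matrix.mul_apply, Matrix.transpose_apply, dotProduct, Matrix.mulVec]
  have hb : 0 ≤ b := (dotProduct_self_nonneg _).trans (hΔ i)
  have hw : A⁻¹ *ᵥ Δ j ⬝ᵥ A⁻¹ *ᵥ Δ j ≤ b / c ^ 2 := by
    rw [le_div_iff₀' (by positivity)]
    exact (sq_mul_inv_mulVec_dotProduct_self_le hc hA (Δ j)).trans (hΔ j)
  rw [happ]
  refine abs_le_of_sq_le_sq ?_ (div_nonneg hb hc.le)
  calc (Δ i ⬝ᵥ A⁻¹ *ᵥ Δ j) ^ 2 ≤ (Δ i ⬝ᵥ Δ i) * (A⁻¹ *ᵥ Δ j ⬝ᵥ A⁻¹ *ᵥ Δ j) :=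
        sq_dotProduct_le _ _
    _ ≤ b * (b / c ^ 2) := mul_le_mul (hΔ i) hw (dotProduct_self_nonneg _) hb
    _ = (b / c) ^ 2 := by ring

end DotProduct

section Linf

variable {m k : ℕ}

lemma linf_nonneg (A : Matrix (Fin m) (Fin k) ℝ) : 0 ≤ linf A :=
  Real.iSup_nonneg fun _ => Real.iSup_nonneg fun _ => abs_nonneg _

lemma abs_le_linf (A : Matrix (Fin m) (Fin k) ℝ) (i : Fin m) (j : Fin k) : |A i j| ≤ linf A :=
  (le_ciSup (f := fun j' => |A i j'|) (Finite.bddAbove_range _) j).trans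
    (le_ciSup (f := fun i' => ⨆ j', |A i' j'|) (Finite.bddAbove_range _) i)

lemma linf_le {A : Matrix (Fin m) (Fin k) ℝ} {b : ℝ} (hb : 0 ≤ b) (h : ∀ i j, |A i j| ≤ b) :
    linf A ≤ b :=
  Real.iSup_le (fun i => Real.iSup_le (h i) hb) hb

lemma linf_neg (A : Matrix (Fin m) (Fin k) ℝ) : linf (-A) = linf A := by
  simp only [linf, Matrix.neg_apply, abs_neg]

lemma row_dotProduct_self_le (A : Matrix (Fin m) (Fin k) ℝ) (i : Fin m) :
    A i ⬝ᵥ A i ≤ k * linf A ^ 2 := by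
  calc A i ⬝ᵥ A i ≤ ∑ _j : Fin k, linf A ^ 2 := by
        refine Finset.sum_le_sum fun j _ => ?_
        rw [← abs_mul_abs_self, sq]
        exact mul_self_le_mul_self (abs_nonneg _) (abs_le_linf A i j)
    _ = k * linf A ^ 2 := by simp

lemma abs_dotProduct_mulVec_le (A : Matrix (Fin k) (Fin k) ℝ) (x : Fin k → ℝ) :
    |x ⬝ᵥ A *ᵥ x| ≤ k * linf A * (x ⬝ᵥ x) := by
  have hx := dotProduct_self_nonneg x
  have hrows : ∑ i, A i ⬝ᵥ A i ≤ k * (k * linf A ^ 2) := by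
    calc ∑ i, A i ⬝ᵥ A i ≤ ∑ _i : Fin k, k * linf A ^ 2 :=
          Finset.sum_le_sum fun i _ => row_dotProduct_self_le A i
      _ = k * (k * linf A ^ 2) := by simp
  refine abs_le_of_sq_le_sq ?_ (by have := linf_nonneg A; positivity)
  calc (x ⬝ᵥ A *ᵥ x) ^ 2 ≤ (x ⬝ᵥ x) * (A *ᵥ x ⬝ᵥ A *ᵥ x) := sq_dotProduct_le _ _
    _ ≤ (x ⬝ᵥ x) * ((k * (k * linf A ^ 2)) * (x ⬝ᵥ x)) := by
        gcongr
        exact (mulVec_dotProduct_self_le A x).trans (by gcongr)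
    _ = (k * linf A * (x ⬝ᵥ x)) ^ 2 := by ring

lemma coercive_of_linf_sub_le {A B : Matrix (Fin k) (Fin k) ℝ} {c c' : ℝ}
    (hA : ∀ x, c * (x ⬝ᵥ x) ≤ x ⬝ᵥ A *ᵥ x) (hBA : k * linf (B - A) ≤ c') (x : Fin k → ℝ) :
    (c - c') * (x ⬝ᵥ x) ≤ x ⬝ᵥ B *ᵥ x := by
  have hsplit : x ⬝ᵥ B *ᵥ x = x ⬝ᵥ A *ᵥ x + x ⬝ᵥ (B - A) *ᵥ x := by
    rw [Matrix.sub_mulVec, dotProduct_sub]; ring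
  have hpert : |x ⬝ᵥ (B - A) *ᵥ x| ≤ c' * (x ⬝ᵥ x) :=
    (abs_dotProduct_mulVec_le _ x).trans
      (mul_le_mul_of_nonneg_right hBA (dotProduct_self_nonneg x))
  linarith [hA x, neg_abs_le (x ⬝ᵥ (B - A) *ᵥ x)]

end Linf

section LamMin

variable {k : ℕ}

lemma lamMin_eq (A : Matrix (Fin k) (Fin k) ℝ) :
    lamMin A = sInf {c : ℝ | ∃ x : Fin k → ℝ, x ⬝ᵥ x = 1 ∧ c = x ⬝ᵥ A *ᵥ x} := by
  simp only [lamMin, dotProduct, Matrix.mulVec, Finset.mul_sum, sq, mul_assoc]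

lemma lamMin_le (A : Matrix (Fin k) (Fin k) ℝ) {x : Fin k → ℝ} (hx : x ⬝ᵥ x = 1) :
    lamMin A ≤ x ⬝ᵥ A *ᵥ x := by
  rw [lamMin_eq]
  refine csInf_le ⟨-(k * linf A), ?_⟩ ⟨x, hx, rfl⟩
  rintro _ ⟨y, hy, rfl⟩
  have h := abs_dotProduct_mulVec_le A y
  rw [hy, mul_one] at h
  linarith [neg_abs_le (y ⬝ᵥ A *ᵥ y)]

lemma lamMin_mul_dotProduct_self_le (A : Matrix (Fin k) (Fin k) ℝ) (x : Fin k → ℝ) :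
    lamMin A * (x ⬝ᵥ x) ≤ x ⬝ᵥ A *ᵥ x := by
  rcases eq_or_ne x 0 with rfl | hx
  · simp
  have hpos : 0 < x ⬝ᵥ x := lt_of_le_of_ne (dotProduct_self_nonneg x)
    (Ne.symm (mt dotProduct_self_eq_zero.1 hx))
  set t := (√(x ⬝ᵥ x))⁻¹
  have ht : t ^ 2 * (x ⬝ᵥ x) = 1 := by
    rw [inv_pow, Real.sq_sqrt hpos.le, inv_mul_cancel₀ hpos.ne']
  have h := lamMin_le A (x := t • x) (by
    rw [smul_dotProduct, dotProduct_smul, smul_eq_mul, smul_eq_mul, ← mul_assoc, ← sq, ht])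
  rw [Matrix.mulVec_smul, smul_dotProduct, dotProduct_smul, smul_eq_mul, smul_eq_mul,
    ← mul_assoc, ← sq] at h
  calc lamMin A * (x ⬝ᵥ x) ≤ t ^ 2 * (x ⬝ᵥ A *ᵥ x) * (x ⬝ᵥ x) :=
        mul_le_mul_of_nonneg_right h hpos.le
    _ = x ⬝ᵥ A *ᵥ x := by rw [mul_right_comm, ht, one_mul]

-- The Rayleigh quotient attains its infimum on the (compact) unit sphere, at a nonzero vector.
lemma lamMin_pos [NeZero k] {A : Matrix (Fin k) (Fin k) ℝ} (hA : A.PosDef) : 0 < lamMin A := by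
  set S : Set (Fin k → ℝ) := {x | x ⬝ᵥ x = 1}
  have hS : IsCompact S := by
    refine Metric.isCompact_of_isClosed_isBounded (isClosed_eq (by fun_prop) continuous_const)
      ((Metric.isBounded_closedBall (x := 0) (r := 1)).subset fun x hx => ?_)
    rw [Metric.mem_closedBall, dist_zero_right,
      pi_norm_le_iff_of_nonneg zero_le_one]
    intro i
    rw [Real.norm_eq_abs, ← abs_one, ← sq_le_sq, one_pow, ← hx.out, sq]
    exact Finset.single_le_sum (f := fun j => x j * x j) (fun j _ => mul_self_nonneg (x j))
      (Finset.mem_univ i)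
  have hne : S.Nonempty := ⟨Pi.single 0 1, by simp [S]⟩
  obtain ⟨x₀, hx₀, hmin⟩ :=
    hS.exists_isMinOn hne (f := fun x => x ⬝ᵥ A *ᵥ x) (by fun_prop)
  have hx₀0 : x₀ ≠ 0 := by rintro rfl; simp [S] at hx₀
  have hpos : 0 < x₀ ⬝ᵥ A *ᵥ x₀ := by simpa using hA.dotProduct_mulVec_pos hx₀0
  rw [lamMin_eq]
  refine hpos.trans_le (le_csInf ⟨_, x₀, hx₀, rfl⟩ ?_)
  rintro _ ⟨y, hy, rfl⟩
  exact hmin hy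

lemma inv_mul_dotProduct_self_le {A : Matrix (Fin k) (Fin k) ℝ} (hA : A.PosDef) {M : ℝ}
    (hM : (lamMin A)⁻¹ ≤ M) (x : Fin k → ℝ) : M⁻¹ * (x ⬝ᵥ x) ≤ x ⬝ᵥ A *ᵥ x := by
  rcases eq_or_ne x 0 with rfl | hx
  · simp
  obtain ⟨i, -⟩ := Function.ne_iff.1 hx
  have : NeZero k := ⟨i.pos.ne'⟩
  have hlam := lamMin_pos hA
  calc M⁻¹ * (x ⬝ᵥ x) ≤ lamMin A * (x ⬝ᵥ x) :=
        mul_le_mul_of_nonneg_right (inv_le_of_inv_le₀ hlam hM) (dotProduct_self_nonneg x)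
    _ ≤ x ⬝ᵥ A *ᵥ x := lamMin_mul_dotProduct_self_le A x

end LamMin

section Schur

variable {ι κ : Type*} [Fintype ι] [DecidableEq ι]

lemma sigmaZhat_sub_sigmaZbreve_eq (Y : Matrix κ κ ℝ) (S β : Matrix κ ι ℝ) {A : Matrix ι ι ℝ}
    (hsym : Aᵀ = A) (hA : IsUnit A.det) :
    (Y - (S * A⁻¹) * A * (S * A⁻¹)ᵀ) - (Y - S * βᵀ - β * Sᵀ + β * A * βᵀ)
      = -((S - β * A) * A⁻¹ * (S - β * A)ᵀ) := by
  have hinv : A⁻¹ᵀ = A⁻¹ := by rw [Matrix.transpose_nonsing_inv, hsym]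
  have hcancel (X : Matrix ι κ ℝ) : A⁻¹ * (A * X) = X := by
    rw [← Matrix.mul_assoc, Matrix.nonsing_inv_mul _ hA, Matrix.one_mul]
  have hcancel' (X : Matrix ι κ ℝ) : A * (A⁻¹ * X) = X := by
    rw [← Matrix.mul_assoc, Matrix.mul_nonsing_inv _ hA, Matrix.one_mul]
  simp only [Matrix.transpose_mul, Matrix.transpose_sub, hinv, hsym, Matrix.sub_mul,
    Matrix.mul_sub, Matrix.mul_assoc, hcancel, hcancel']
  abel

end Schur

lemma linf_sigmaZhat_sub_sigmaZbreve_le {d r : ℕ} (Y : Matrix (Fin d) (Fin d) ℝ)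
    (S β : Matrix (Fin d) (Fin r) ℝ) {X Xhat Xdag : Matrix (Fin r) (Fin r) ℝ} {M : ℝ}
    (hM : 0 < M) (hX : X.PosDef) (hlamMin : (lamMin X)⁻¹ ≤ M) (hXhat : Xhat.IsHermitian)
    (hdag : IsUnit Xhat.det → Xdag = Xhat⁻¹) (hclose : r * linf (Xhat - X) ≤ (2 * M)⁻¹) :
    linf ((Y - (S * Xdag) * Xhat * (S * Xdag)ᵀ) - (Y - S * βᵀ - β * Sᵀ + β * Xhat * βᵀ))
      ≤ 2 * M * (r * linf (S - β * Xhat) ^ 2) := by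
  have hc : 0 < (2 * M)⁻¹ := by positivity
  have hcoer (x : Fin r → ℝ) : (2 * M)⁻¹ * (x ⬝ᵥ x) ≤ x ⬝ᵥ Xhat *ᵥ x := by
    have h := coercive_of_linf_sub_le (inv_mul_dotProduct_self_le hX hlamMin) hclose x
    rwa [show M⁻¹ - (2 * M)⁻¹ = (2 * M)⁻¹ by field_simp; ring] at h
  have hunit := isUnit_det_of_coercive hc hcoer
  have hsym : Xhatᵀ = Xhat := by simpa using hXhat.eq
  rw [hdag hunit, sigmaZhat_sub_sigmaZbreve_eq Y S β hsym hunit, linf_neg]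
  refine linf_le (by have := linf_nonneg (S - β * Xhat); positivity) fun i j => ?_
  simpa only [div_inv_eq_mul, mul_comm] using
    abs_mul_inv_mul_transpose_apply_le hc hcoer _ (row_dotProduct_self_le _) i j

lemma inv_sq_mul_linf_sigmaZhat_sub_sigmaZbreve_le {d r : ℕ} (Y : Matrix (Fin d) (Fin d) ℝ)
    (S β : Matrix (Fin d) (Fin r) ℝ) {X Xhat Xdag : Matrix (Fin r) (Fin r) ℝ} {M lam ε : ℝ}
    (hM : 0 < M) (hlam : 0 < lam) (hε : 0 ≤ ε) (hX : X.PosDef) (hXhat : Xhat.IsHermitian)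
    (hdag : IsUnit Xhat.det → Xdag = Xhat⁻¹) (hXbound : linf X + (lamMin X)⁻¹ ≤ M)
    (hclose : linf (Xhat - X) ≤ lam) (hr : r * lam ≤ (2 * M)⁻¹)
    (hS : linf (S - β * Xhat) ≤ √(ε * (2 * M)⁻¹) * lam) :
    (lam ^ 2)⁻¹ *
        linf ((Y - (S * Xdag) * Xhat * (S * Xdag)ᵀ) - (Y - S * βᵀ - β * Sᵀ + β * Xhat * βᵀ))
      ≤ ε * r := by
  have hlamMin : (lamMin X)⁻¹ ≤ M := by linarith [linf_nonneg X]
  have hrclose : r * linf (Xhat - X) ≤ (2 * M)⁻¹ :=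
    (mul_le_mul_of_nonneg_left hclose r.cast_nonneg).trans hr
  have hSsq : linf (S - β * Xhat) ^ 2 ≤ ε * (2 * M)⁻¹ * lam ^ 2 := by
    calc linf (S - β * Xhat) ^ 2 ≤ (√(ε * (2 * M)⁻¹) * lam) ^ 2 :=
          pow_le_pow_left₀ (linf_nonneg _) hS 2
      _ = ε * (2 * M)⁻¹ * lam ^ 2 := by rw [mul_pow, Real.sq_sqrt (by positivity)]
  rw [inv_mul_le_iff₀ (by positivity)]
  calc _ ≤ 2 * M * (r * linf (S - β * Xhat) ^ 2) :=
        linf_sigmaZhat_sub_sigmaZbreve_le Y S β hM hX hlamMin hXhat hdag hrclose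
    _ ≤ 2 * M * (r * (ε * (2 * M)⁻¹ * lam ^ 2)) := by gcongr
    _ = lam ^ 2 * (ε * r) := by field_simp

lemma IsBigOp.exists_eventually_measure_lt {Ω : ℕ → Type*} [∀ n, MeasurableSpace (Ω n)]
    {P : ∀ n, Measure (Ω n)} [∀ n, IsProbabilityMeasure (P n)] {Z : ∀ n, Ω n → ℝ}
    (hZ : IsBigOp P Z (fun _ _ => 1)) {η : ℝ} (hη : 0 < η) :
    ∃ M, 0 < M ∧ ∀ᶠ n in atTop, ((P n) {ω | M < |Z n ω|}).toReal < η := by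
  obtain ⟨M, hM, hlimsup⟩ := hZ (η / 2) (half_pos hη)
  refine ⟨M, hM, ?_⟩
  simpa only [mul_one] using eventually_lt_of_limsup_lt (hlimsup.trans_lt (half_lt_self hη))
    (isBoundedUnder_of ⟨1, fun n => measureReal_le_one⟩)

lemma measureReal_lt_add_of_ae_le_union {α : Type*} [MeasurableSpace α] {μ : Measure α}
    [IsFiniteMeasure μ] {s t₁ t₂ t₃ t₄ : Set α} {a₁ a₂ a₃ a₄ : ℝ}
    (hs : s ≤ᵐ[μ] (t₁ ∪ t₂ ∪ t₃ ∪ t₄ : Set α)) (h₁ : μ.real t₁ < a₁) (h₂ : μ.real t₂ < a₂)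
    (h₃ : μ.real t₃ < a₃) (h₄ : μ.real t₄ < a₄) : μ.real s < a₁ + a₂ + a₃ + a₄ := by
  calc μ.real s ≤ μ.real (t₁ ∪ t₂ ∪ t₃ ∪ t₄) :=
        ENNReal.toReal_mono (measure_ne_top _ _) (measure_mono_ae hs)
    _ ≤ μ.real t₁ + μ.real t₂ + μ.real t₃ + μ.real t₄ := by
        linarith [measureReal_union_le (μ := μ) (t₁ ∪ t₂ ∪ t₃) t₄,
          measureReal_union_le (μ := μ) (t₁ ∪ t₂) t₃, measureReal_union_le (μ := μ) t₁ t₂]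
    _ < a₁ + a₂ + a₃ + a₄ := by linarith

theorem sigmaZhat_approx_breve_general
    {Ω : ℕ → Type*} [∀ n, MeasurableSpace (Ω n)]
    (P : ∀ n, Measure (Ω n)) [∀ n, IsProbabilityMeasure (P n)]
    (d r : ℕ → ℕ)
    -- the (non-random) factor loading matrices β
    (β : ∀ n, Matrix (Fin (d n)) (Fin (r n)) ℝ)
    -- the random matrices Σ_X, Σ_Z, a.s. positive definite
    (SigX : ∀ n, Ω n → Matrix (Fin (r n)) (Fin (r n)) ℝ)
    (hSigX : ∀ n, ∀ᵐ ω ∂(P n), (SigX n ω).PosDef)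
    -- the estimators Σ̂_{Y,n}, Σ̂_{X,n}, Σ̂_{YX,n} and Σ̂_{X,n}^†
    (SigYhat : ∀ n, Ω n → Matrix (Fin (d n)) (Fin (d n)) ℝ)
    (SigXhat : ∀ n, Ω n → Matrix (Fin (r n)) (Fin (r n)) ℝ)
    (hSigXhat : ∀ n ω, (SigXhat n ω).PosSemidef)
    (SigYXhat : ∀ n, Ω n → Matrix (Fin (d n)) (Fin (r n)) ℝ)
    (SigXdag : ∀ n, Ω n → Matrix (Fin (r n)) (Fin (r n)) ℝ)
    (hSigXdag : ∀ n ω, (SigXdag n ω).PosDef ∧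
      (IsUnit (SigXhat n ω).det → SigXdag n ω = (SigXhat n ω)⁻¹))
    -- β̂_n := Σ̂_{YX,n} Σ̂_{X,n}^†
    (betaHat : ∀ n, Ω n → Matrix (Fin (d n)) (Fin (r n)) ℝ)
    (hbetaHat : ∀ n ω, betaHat n ω = SigYXhat n ω * SigXdag n ω)
    -- Σ̂_{Z,n} and Σ̆_{Z,n}
    (SigZhat : ∀ n, Ω n → Matrix (Fin (d n)) (Fin (d n)) ℝ)
    (hSigZhat : ∀ n ω, SigZhat n ω =
      SigYhat n ω - betaHat n ω * SigXhat n ω * (betaHat n ω)ᵀ)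
    (SigZbreve : ∀ n, Ω n → Matrix (Fin (d n)) (Fin (d n)) ℝ)
    (hSigZbreve : ∀ n ω, SigZbreve n ω =
      SigYhat n ω - SigYXhat n ω * (β n)ᵀ - β n * (SigYXhat n ω)ᵀ +
        β n * SigXhat n ω * (β n)ᵀ)
    -- [C3]
    (hC3 : IsBigOp P (fun n ω => linf (SigX n ω) + (lamMin (SigX n ω))⁻¹) (fun _ _ => 1))
    -- [C4]
    (s : ℕ → ℝ) (hs : ∀ n, 1 ≤ s n)
    -- the penalty parameters λ_n, positive random variables
    (lam : ∀ n, Ω n → ℝ) (hlam : ∀ n ω, 0 < lam n ω)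
    -- [D1]
    (hD1a : IsLittleOp P (fun n ω => linf (SigXhat n ω - SigX n ω)) lam)
    (hD1b : IsLittleOp P (fun n ω => linf (SigYXhat n ω - β n * SigXhat n ω)) lam)
    -- [D2]
    (hD2 : IsLittleOp P (fun n ω => (s n + r n) * lam n ω) (fun _ _ => 1)) :
    IsLittleOp P (fun n ω => ((lam n ω) ^ 2)⁻¹ * linf (SigZhat n ω - SigZbreve n ω))
      (fun n _ => (r n : ℝ)) := by
  intro ε hε
  refine tendsto_order.2 ⟨fun a ha => .of_forall fun n => ha.trans_le ENNReal.toReal_nonneg,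
    fun η hη => ?_⟩
  have hη4 : 0 < η / 4 := by positivity
  obtain ⟨M, hM, hX⟩ := hC3.exists_eventually_measure_lt hη4
  have hc : 0 < (2 * M)⁻¹ := by positivity
  have hδ : 0 < √(ε * (2 * M)⁻¹) := by positivity
  filter_upwards [hX, (hD1a 1 one_pos).eventually_lt_const hη4,
    (hD2 _ hc).eventually_lt_const hη4, (hD1b _ hδ).eventually_lt_const hη4]
    with n h3 h1 h2 h4
  refine (measureReal_lt_add_of_ae_le_union ?_ h3 h1 h2 h4).trans_eq (by ring)
  filter_upwards [hSigX n] with ω hXω hbad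
  change ω ∈ (_ : Set (Ω n))
  by_contra hgood
  simp only [Set.mem_union, Set.mem_ofPred_eq, not_or, not_lt, one_mul, mul_one] at hgood
  obtain ⟨⟨⟨g3, g1⟩, g2⟩, g4⟩ := hgood
  refine absurd hbad (not_lt.2 ?_)
  rw [abs_of_nonneg (by have := linf_nonneg (SigZhat n ω - SigZbreve n ω); positivity),
    hSigZhat, hSigZbreve, hbetaHat]
  exact inv_sq_mul_linf_sigmaZhat_sub_sigmaZbreve_le _ _ _ hM (hlam n ω) hε.le hXω
    (hSigXhat n ω).1 ((hSigXdag n ω).2) ((le_abs_self _).trans g3) ((le_abs_self _).trans g1)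
    (by nlinarith [le_abs_self ((s n + r n) * lam n ω), hs n, hlam n ω])
    ((le_abs_self _).trans g4)

/-- Σ̂_{Z,n} and Σ̆_{Z,n} are close (Lemma C.2). -/
theorem sigmaZhat_approx_breve
    {Ω : ℕ → Type*} [∀ n, MeasurableSpace (Ω n)]
    (P : ∀ n, Measure (Ω n)) [∀ n, IsProbabilityMeasure (P n)]
    (d r : ℕ → ℕ) (hd : ∀ n, 2 ≤ d n)
    -- the (non-random) factor loading matrices β
    (β : ∀ n, Matrix (Fin (d n)) (Fin (r n)) ℝ)
    -- the random matrices Σ_X, Σ_Z, a.s. positive definite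
    (SigX : ∀ n, Ω n → Matrix (Fin (r n)) (Fin (r n)) ℝ)
    (hSigX : ∀ n, ∀ᵐ ω ∂(P n), (SigX n ω).PosDef)
    (SigZ : ∀ n, Ω n → Matrix (Fin (d n)) (Fin (d n)) ℝ)
    (hSigZ : ∀ n, ∀ᵐ ω ∂(P n), (SigZ n ω).PosDef)
    -- Σ_Y := β Σ_X βᵀ + Σ_Z
    (SigY : ∀ n, Ω n → Matrix (Fin (d n)) (Fin (d n)) ℝ)
    (hSigY : ∀ n ω, SigY n ω = β n * SigX n ω * (β n)ᵀ + SigZ n ω)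
    -- the estimators Σ̂_{Y,n}, Σ̂_{X,n}, Σ̂_{YX,n} and Σ̂_{X,n}^†
    (SigYhat : ∀ n, Ω n → Matrix (Fin (d n)) (Fin (d n)) ℝ)
    (hSigYhat : ∀ n ω, (SigYhat n ω).IsSymm)
    (SigXhat : ∀ n, Ω n → Matrix (Fin (r n)) (Fin (r n)) ℝ)
    (hSigXhat : ∀ n ω, (SigXhat n ω).PosSemidef)
    (SigYXhat : ∀ n, Ω n → Matrix (Fin (d n)) (Fin (r n)) ℝ)
    (SigXdag : ∀ n, Ω n → Matrix (Fin (r n)) (Fin (r n)) ℝ)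
    (hSigXdag : ∀ n ω, (SigXdag n ω).PosDef ∧
      (IsUnit (SigXhat n ω).det → SigXdag n ω = (SigXhat n ω)⁻¹))
    -- β̂_n := Σ̂_{YX,n} Σ̂_{X,n}^†
    (betaHat : ∀ n, Ω n → Matrix (Fin (d n)) (Fin (r n)) ℝ)
    (hbetaHat : ∀ n ω, betaHat n ω = SigYXhat n ω * SigXdag n ω)
    -- Σ̂_{Z,n} and Σ̆_{Z,n}
    (SigZhat : ∀ n, Ω n → Matrix (Fin (d n)) (Fin (d n)) ℝ)
    (hSigZhat : ∀ n ω, SigZhat n ω =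
      SigYhat n ω - betaHat n ω * SigXhat n ω * (betaHat n ω)ᵀ)
    (SigZbreve : ∀ n, Ω n → Matrix (Fin (d n)) (Fin (d n)) ℝ)
    (hSigZbreve : ∀ n ω, SigZbreve n ω =
      SigYhat n ω - SigYXhat n ω * (β n)ᵀ - β n * (SigYXhat n ω)ᵀ +
        β n * SigXhat n ω * (β n)ᵀ)
    -- [C1]
    (hC1 : IsBigOp P (fun n ω => linf (SigY n ω)) (fun _ _ => 1))
    (hC1' : ∃ C : ℝ, ∀ n, linf (β n) ≤ C)
    -- [C2]
    (hC2 : IsBigOp P (fun n ω => lamMax (SigZ n ω) + (lamMin (SigZ n ω))⁻¹) (fun _ _ => 1))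
    -- [C3]
    (hC3 : IsBigOp P (fun n ω => linf (SigX n ω) + (lamMin (SigX n ω))⁻¹) (fun _ _ => 1))
    -- [C4]
    (s : ℕ → ℝ) (hs : ∀ n, 1 ≤ s n)
    (hC4 : IsBigOp P (fun n ω => (spars ((SigZ n ω)⁻¹) : ℝ)) (fun n _ => s n))
    -- the penalty parameters λ_n, positive random variables
    (lam : ∀ n, Ω n → ℝ) (hlam : ∀ n ω, 0 < lam n ω)
    -- [D1]
    (hD1a : IsLittleOp P (fun n ω => linf (SigXhat n ω - SigX n ω)) lam)
    (hD1b : IsLittleOp P (fun n ω => linf (SigYXhat n ω - β n * SigXhat n ω)) lam)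
    (hD1c : IsLittleOp P (fun n ω => linf (SigZbreve n ω - SigZ n ω)) lam)
    -- [D2]
    (hD2 : IsLittleOp P (fun n ω => (s n + r n) * lam n ω) (fun _ _ => 1))
    -- [D3]
    (hD3 : Filter.Tendsto (fun n => ((P n) {ω |
        (Matrix.fromBlocks (SigXhat n ω) ((SigYXhat n ω)ᵀ)
          (SigYXhat n ω) (SigYhat n ω)).PosSemidef}).toReal)
      Filter.atTop (nhds 1)) :
    IsLittleOp P (fun n ω => ((lam n ω) ^ 2)⁻¹ * linf (SigZhat n ω - SigZbreve n ω))
      (fun n _ => (r n : ℝ)) :=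
  sigmaZhat_approx_breve_general P d r β SigX hSigX SigYhat SigXhat hSigXhat SigYXhat SigXdag
    hSigXdag betaHat hbetaHat SigZhat hSigZhat SigZbreve hSigZbreve hC3 s hs lam hlam hD1a hD1b hD2

end
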